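/- arXiv:1706.04747 — 5 statements merged into one kernel-verified Lean document; each statement's English description precedes it below -/
import Mathlib

section
/- If δ₁, δ₂ are the two roots of F₃(u, δ) = 2u³δ² + (u⁴−1)δ − 2u = 0 (as a polynomial in δ) for some u with u⁴ ∉ {0, 1} and u⁸ + 14u⁴ + 1 ≠ 0, then δ₁⁴ ≠ 0, 1, δ₂⁴ ≠ 0, 1, and δ₁ ∉ {δ₂, −δ₂, 1/δ₂, −1/δ₂}. -/
lemma aux_ne_zero {K : Type*} [Field K] [CharZero K] (u δ : K) (hu : u ≠ 0)
    (hq : 2 * u ^ 3 * δ ^ 2 + (u ^ 4 - 1) * δ - 2 * u = 0) : δ ≠ 0 := by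
  rintro rfl
  apply hu
  linear_combination (-1/2 : K) * hq

lemma aux_pow4_ne_one {K : Type*} [Field K] [CharZero K] (u δ : K) (hu1 : u ^ 4 ≠ 1)
    (hq : 2 * u ^ 3 * δ ^ 2 + (u ^ 4 - 1) * δ - 2 * u = 0) : δ ^ 4 ≠ 1 := by
  intro h
  have h0 : (δ ^ 2 - 1) * (δ ^ 2 + 1) = 0 := by linear_combination h
  rcases mul_eq_zero.mp h0 with hs | hs
  · have hs' : δ ^ 2 = 1 := by linear_combination hs
    have key : (u ^ 2 - 1) ^ 4 = 0 := by
      linear_combination ((u^4-1)*δ - 2*u^3 + 2*u) * hq -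
        ((u^4-1)^2 + 2*u^3*((u^4-1)*δ - 2*u^3 + 2*u)) * hs'
    have : u ^ 2 - 1 = 0 := by
      exact pow_eq_zero_iff (by norm_num) |>.mp key
    exact hu1 (by linear_combination (u^2+1) * this)
  · have hs' : δ ^ 2 = -1 := by linear_combination hs
    have key : (u ^ 2 + 1) ^ 4 = 0 := by
      linear_combination (-((u^4-1)*δ + 2*u^3 + 2*u)) * hq +
        ((u^4-1)^2 + 2*u^3*((u^4-1)*δ + 2*u^3 + 2*u)) * hs'
    have : u ^ 2 + 1 = 0 := by
      exact pow_eq_zero_iff (by norm_num) |>.mp key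
    exact hu1 (by linear_combination (u^2-1) * this)

/-- If `δ₁, δ₂` are the two roots of `F₃(u, δ) = 2u³δ² + (u⁴−1)δ − 2u = 0` (as a
polynomial in `δ`) for some `u` with `u⁴ ∉ {0, 1}` and `u⁸ + 14u⁴ + 1 ≠ 0`, then `δ₁⁴ ≠ 0, 1`,
`δ₂⁴ ≠ 0, 1`, and `δ₁ ∉ {δ₂, −δ₂, 1/δ₂, −1/δ₂}`. -/
theorem stmt_2 {K : Type*} [Field K] [CharZero K] [IsAlgClosed K] (u δ₁ δ₂ : K)
    (hu0 : u ^ 4 ≠ 0) (hu1 : u ^ 4 ≠ 1) (hu14 : u ^ 8 + 14 * u ^ 4 + 1 ≠ 0)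
    (hne : δ₁ ≠ δ₂)
    (h₁ : 2 * u ^ 3 * δ₁ ^ 2 + (u ^ 4 - 1) * δ₁ - 2 * u = 0)
    (h₂ : 2 * u ^ 3 * δ₂ ^ 2 + (u ^ 4 - 1) * δ₂ - 2 * u = 0) :
    δ₁ ^ 4 ≠ 0 ∧ δ₁ ^ 4 ≠ 1 ∧ δ₂ ^ 4 ≠ 0 ∧ δ₂ ^ 4 ≠ 1 ∧
      δ₁ ≠ δ₂ ∧ δ₁ ≠ -δ₂ ∧ δ₁ ≠ 1 / δ₂ ∧ δ₁ ≠ -(1 / δ₂) := by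
  have hu : u ≠ 0 := fun h => hu0 (by rw [h]; ring)
  have hd1 : δ₁ ≠ 0 := aux_ne_zero u δ₁ hu h₁
  have hd2 : δ₂ ≠ 0 := aux_ne_zero u δ₂ hu h₂
  have hsub : (δ₁ - δ₂) * (2 * u ^ 3 * (δ₁ + δ₂) + (u ^ 4 - 1)) = 0 := by
    linear_combination h₁ - h₂
  have hsum : 2 * u ^ 3 * (δ₁ + δ₂) + (u ^ 4 - 1) = 0 :=
    (mul_eq_zero.mp hsub).resolve_left (sub_ne_zero.mpr hne)
  have hpr0 : 2 * u * (u ^ 2 * (δ₁ * δ₂) + 1) = 0 := by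
    linear_combination δ₁ * hsum - h₁
  have hprod : u ^ 2 * (δ₁ * δ₂) + 1 = 0 := by
    rcases mul_eq_zero.mp hpr0 with h | h
    · exact absurd (by linear_combination h / 2 : u = 0) hu
    · exact h
  refine ⟨pow_ne_zero 4 hd1, aux_pow4_ne_one u δ₁ hu1 h₁,
    pow_ne_zero 4 hd2, aux_pow4_ne_one u δ₂ hu1 h₂, hne, ?_, ?_, ?_⟩
  · rintro rfl
    exact hu1 (by linear_combination hsum)
  · intro h
    have hmul : δ₁ * δ₂ = 1 := by
      field_simp at h
      linear_combination h
    exact hu1 (by linear_combination (u^2-1) * hprod - (u^2-1) * u^2 * hmul)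
  · intro h
    have hmul : δ₁ * δ₂ = -1 := by
      field_simp at h
      linear_combination h
    exact hu1 (by linear_combination -(u^2+1) * hprod + (u^2+1) * u^2 * hmul)
end

section
/- For any a and any cube root β of (a−1)², the value x = −(2/3)a − (4/3)a·β is a root of the cubic rc(x) = x³ + 2ax² + (4/3)a²x + (64/27)a⁵ − (128/27)a⁴ + (8/3)a³. Conversely, every root of rc is of this form for some cube root β of (a−1)². -/
/-- For any `a` in an algebraically closed field of characteristic zero and any
cube root `β` of `(a−1)²`, the value `x = −(2/3)a − (4/3)a·β` is a root of the cubic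
`rc(x) = x³ + 2ax² + (4/3)a²x + (64/27)a⁵ − (128/27)a⁴ + (8/3)a³`. Conversely, every root of
`rc` is of this form for some cube root `β` of `(a−1)²`. -/
theorem stmt_5 {K : Type*} [Field K] [CharZero K] [IsAlgClosed K] (a : K) :
    (∀ β : K, β ^ 3 = (a - 1) ^ 2 →
      (-(2 / 3) * a - (4 / 3) * a * β) ^ 3 + 2 * a * (-(2 / 3) * a - (4 / 3) * a * β) ^ 2
          + (4 / 3) * a ^ 2 * (-(2 / 3) * a - (4 / 3) * a * β)
          + (64 / 27) * a ^ 5 - (128 / 27) * a ^ 4 + (8 / 3) * a ^ 3 = 0) ∧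
    (∀ x : K,
      x ^ 3 + 2 * a * x ^ 2 + (4 / 3) * a ^ 2 * x
          + (64 / 27) * a ^ 5 - (128 / 27) * a ^ 4 + (8 / 3) * a ^ 3 = 0 →
      ∃ β : K, β ^ 3 = (a - 1) ^ 2 ∧ x = -(2 / 3) * a - (4 / 3) * a * β) := by
  constructor
  · intro β hβ
    linear_combination (-(64/27)*a^3) * hβ
  · intro x hx
    by_cases ha : a = 0
    · subst ha
      refine ⟨1, by ring, ?_⟩
      have : x ^ 3 = 0 := by linear_combination hx
      have hx0 : x = 0 := by
        exact pow_eq_zero_iff (by norm_num) |>.mp this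
      rw [hx0]; ring
    · refine ⟨-(3*(x + (2/3)*a))/(4*a), ?_, ?_⟩
      · have h4 : (4*a : K) ≠ 0 := by simpa using ha
        rw [div_pow, div_eq_iff (pow_ne_zero 3 h4)]
        linear_combination (-27:K) * hx
      · field_simp
        ring
end

section
/- Suppose K is a subfield of ℚ̄ closed under taking square roots, containing all roots of unity, and such that for every elliptic curve E in Weierstrass form with all 2-torsion x-coordinates in K, all x-coordinates of all torsion points of E lie in K. Then K is closed under taking cube roots. -/
open WeierstrassCurve
open Classical

/-!
For `a ∈ K` with `a ≠ 0, -1` put `t = a + 1` and consider `E : y² = (x - t)(x² - t)`. Its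
2-torsion x-coordinates `t, ±√t` lie in `K`, hence so do the roots `x₁, …, x₄` of the 3-division
polynomial `ψ₃ = 3x⁴ - 4tx³ - 6tx² + 12t²x - 4t³ - t²`, and with them the root
`r = x₁x₂ + x₃x₄` of its resolvent cubic, which satisfies `(3r + 2t)³ = -64t³a²`. So
`c = -(3r + 2t)/(4t) ∈ K` is a cube root of `a²`; a cube root `b` of `a` then has `b² = ζc` for a
cube root of unity `ζ`, whence `b = a / b² ∈ K`.
-/

open Polynomial

namespace WeierstrassCurve.Affine

variable {F : Type*} [Field F] {W : WeierstrassCurve.Affine F} {x y : F}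

lemma sub_negY_sq_eq_eval_Ψ₂Sq (h : W.Equation x y) : (y - W.negY x y) ^ 2 = W.Ψ₂Sq.eval x := by
  rw [equation_iff] at h
  simp only [negY, Ψ₂Sq, b₂, b₄, b₆, eval_add, eval_mul, eval_pow, eval_C, eval_X]
  linear_combination 4 * h

lemma addX_slope_self_of_eval_Ψ₃ (h : W.Equation x y) (hy : y ≠ W.negY x y)
    (hψ : W.Ψ₃.eval x = 0) : W.addX x x (W.slope x x y y) = x := by
  have hD : y - W.negY x y ≠ 0 := sub_ne_zero.mpr hy
  rw [equation_iff] at h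
  simp only [Ψ₃, b₂, b₄, b₆, b₈, eval_add, eval_mul, eval_pow, eval_C, eval_X, eval_ofNat] at hψ
  rw [slope_of_Y_ne rfl hy, addX]
  field_simp
  simp only [negY] at hD ⊢
  linear_combination (-(W.a₁ ^ 2 + 4 * W.a₂ + 12 * x)) * h - hψ

lemma eval_Ψ₂Sq_eq_zero_of_two_nsmul_eq_zero (h : W.Nonsingular x y)
    (h2 : 2 • Point.some x y h = 0) : W.Ψ₂Sq.eval x = 0 := by
  have hy : y = W.negY x y := by
    by_contra hy
    rw [two_nsmul, Point.add_self_of_Y_ne hy] at h2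
    exact Point.some_ne_zero _ h2
  rw [← sub_negY_sq_eq_eval_Ψ₂Sq h.1, ← hy, sub_self, sq, zero_mul]

lemma three_nsmul_eq_zero_of_eval_Ψ₃ (h : W.Nonsingular x y) (hy : y ≠ W.negY x y)
    (hψ : W.Ψ₃.eval x = 0) : 3 • Point.some x y h = 0 := by
  have hP : Point.some x y h ≠ 0 := Point.some_ne_zero h
  obtain h2P | h2P : 2 • Point.some x y h = Point.some x y h ∨
      2 • Point.some x y h = -Point.some x y h := by
    rw [two_nsmul, Point.add_self_of_Y_ne hy]
    exact Point.X_eq_iff.mp (addX_slope_self_of_eval_Ψ₃ h.1 hy hψ)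
  · rw [two_nsmul, add_eq_right] at h2P
    exact absurd h2P hP
  · rw [succ_nsmul, h2P, neg_add_cancel]

lemma exists_nonsingular_of_eval_Ψ₂Sq_ne_zero [IsAlgClosed F] [NeZero (2 : F)]
    (hx : W.Ψ₂Sq.eval x ≠ 0) : ∃ y, W.Nonsingular x y ∧ y ≠ W.negY x y := by
  obtain ⟨s, hs⟩ := IsAlgClosed.exists_pow_nat_eq (W.Ψ₂Sq.eval x) two_pos
  set y := (s - W.a₁ * x - W.a₃) / 2
  have hsy : y - W.negY x y = s := by simp only [y, negY]; field_simp; ring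
  have hy : y ≠ W.negY x y := by
    rw [← sub_ne_zero, hsy]; rintro rfl; exact hx (by rw [← hs]; ring)
  have heq : W.Equation x y := by
    simp only [Ψ₂Sq, b₂, b₄, b₆, eval_add, eval_mul, eval_pow, eval_C, eval_X] at hs
    rw [equation_iff]
    simp only [y]; field_simp
    linear_combination hs
  exact ⟨y, (nonsingular_iff _ _).mpr ⟨heq, Or.inr hy⟩, hy⟩

lemma exists_isOfFinAddOrder_of_eval_Ψ₃ [IsAlgClosed F] [NeZero (2 : F)]
    (hψ₃ : W.Ψ₃.eval x = 0) (hψ₂ : W.Ψ₂Sq.eval x ≠ 0) :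
    ∃ y, ∃ h : W.Nonsingular x y, IsOfFinAddOrder (Point.some x y h) := by
  obtain ⟨y, h, hy⟩ := exists_nonsingular_of_eval_Ψ₂Sq_ne_zero hψ₂
  exact ⟨y, h, isOfFinAddOrder_iff_nsmul_eq_zero.mpr
    ⟨3, three_pos, three_nsmul_eq_zero_of_eval_Ψ₃ h hy hψ₃⟩⟩

end WeierstrassCurve.Affine

open WeierstrassCurve.Affine

lemma Polynomial.exists_eval_eq_leadingCoeff_mul_of_natDegree_eq_four {F : Type*} [Field F]
    [IsAlgClosed F] {p : F[X]} (hp : p.natDegree = 4) :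
    ∃ x₁ x₂ x₃ x₄ : F, ∀ v, p.eval v =
      p.leadingCoeff * ((v - x₁) * (v - x₂) * (v - x₃) * (v - x₄)) := by
  have hs := IsAlgClosed.splits p
  obtain ⟨x₁, x₂, x₃, x₄, hroots⟩ :=
    Multiset.card_eq_four.mp ((splits_iff_card_roots.mp hs).trans hp)
  refine ⟨x₁, x₂, x₃, x₄, fun v => ?_⟩
  rw [hs.eval_eq_prod_roots, hroots]
  simp only [Multiset.insert_eq_cons, Multiset.map_cons, Multiset.map_singleton,
    Multiset.prod_cons, Multiset.prod_singleton]
  ring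

section CubeRootCurve

variable {F : Type*} [Field F]

/-- The curve `y² = (x - t)(x² - t)`. -/
def cubeRootCurve (t : F) : WeierstrassCurve F :=
  { a₁ := 0, a₂ := -t, a₃ := 0, a₄ := -t, a₆ := t ^ 2 }

lemma cubeRootCurve_eval_Ψ₂Sq (t x : F) :
    (cubeRootCurve t).Ψ₂Sq.eval x = 4 * ((x - t) * (x ^ 2 - t)) := by
  simp only [Ψ₂Sq, b₂, b₄, b₆, cubeRootCurve, eval_add, eval_mul, eval_pow, eval_C, eval_X]
  ring

lemma cubeRootCurve_eval_Ψ₃ (t x : F) : (cubeRootCurve t).Ψ₃.eval x =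
    3 * x ^ 4 - 4 * t * x ^ 3 - 6 * t * x ^ 2 + 12 * t ^ 2 * x - 4 * t ^ 3 - t ^ 2 := by
  simp only [Ψ₃, b₂, b₄, b₆, b₈, cubeRootCurve, eval_add, eval_mul, eval_pow, eval_C, eval_X,
    eval_ofNat]
  ring

variable [CharZero F] {t : F}

lemma cubeRootCurve_eval_Ψ₂Sq_ne_zero (ht₀ : t ≠ 0) (ht₁ : t ≠ 1) {x : F}
    (hψ : (cubeRootCurve t).Ψ₃.eval x = 0) : (cubeRootCurve t).Ψ₂Sq.eval x ≠ 0 := by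
  rw [cubeRootCurve_eval_Ψ₃] at hψ
  rw [cubeRootCurve_eval_Ψ₂Sq, mul_ne_zero_iff_left (by norm_num : (4 : F) ≠ 0)]
  intro hf
  -- a common root of `Ψ₂Sq` and `Ψ₃` is a double root of `Ψ₂Sq`
  have hf' : 3 * x ^ 2 - 2 * t * x - t = 0 :=
    pow_eq_zero_iff two_ne_zero |>.mp (by linear_combination (12 * x - 4 * t) * hf - hψ)
  rcases mul_eq_zero.mp hf with hx | hx
  · rw [sub_eq_zero.mp hx] at hf'
    have : t * (t - 1) = 0 := by linear_combination hf'
    exact mul_ne_zero ht₀ (sub_ne_zero.mpr ht₁) this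
  · have : (2 * t) * (x - 1) = 0 := by linear_combination 3 * hx - hf'
    rcases mul_eq_zero.mp this with h | h
    · exact ht₀ (by simpa using h)
    · exact ht₁ (by linear_combination -hx + (x + 1) * h)

lemma cubeRootCurve_two_torsion_mem (K : Subfield F)
    (hsq : ∀ a ∈ K, ∀ b : F, b ^ 2 = a → b ∈ K) (ht : t ∈ K) {x y : F}
    (h : (cubeRootCurve t).toAffine.Nonsingular x y) (h2 : 2 • Point.some x y h = 0) : x ∈ K := by
  have := eval_Ψ₂Sq_eq_zero_of_two_nsmul_eq_zero h h2
  rw [cubeRootCurve_eval_Ψ₂Sq, mul_eq_zero_iff_left (by norm_num : (4 : F) ≠ 0)] at this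
  rcases mul_eq_zero.mp this with hx | hx
  · rwa [sub_eq_zero.mp hx]
  · exact hsq t ht x (sub_eq_zero.mp hx)

/-- `x₁x₂ + x₃x₄` is a root of the resolvent cubic of `Ψ₃`; Vieta's formulas are read off from
the values of `Ψ₃` at `0, ±1, ±2`. -/
lemma cubeRootCurve_resolvent {x₁ x₂ x₃ x₄ : F}
    (h : ∀ v, (cubeRootCurve t).Ψ₃.eval v = 3 * ((v - x₁) * (v - x₂) * (v - x₃) * (v - x₄))) :
    (3 * (x₁ * x₂ + x₃ * x₄) + 2 * t) ^ 3 = -64 * t ^ 3 * (t - 1) ^ 2 := by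
  simp only [cubeRootCurve_eval_Ψ₃] at h
  have e₁ : 3 * (x₁ + x₂ + x₃ + x₄) = 4 * t := by
    linear_combination (1 / 12 : F) * (h 2 - h (-2) + 2 * h (-1) - 2 * h 1)
  have e₂ : x₁ * x₂ + x₁ * x₃ + x₁ * x₄ + x₂ * x₃ + x₂ * x₄ + x₃ * x₄ = -2 * t := by
    linear_combination (-1 / 6 : F) * (h 1 + h (-1) - 2 * h 0)
  have e₃ : x₁ * x₂ * x₃ + x₁ * x₂ * x₄ + x₁ * x₃ * x₄ + x₂ * x₃ * x₄ = -4 * t ^ 2 := by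
    linear_combination (-1 / 36 : F) * (8 * (h (-1) - h 1) - (h (-2) - h 2))
  have e₄ : 3 * (x₁ * x₂ * x₃ * x₄) = -4 * t ^ 3 - t ^ 2 := by
    linear_combination -h 0
  set r := x₁ * x₂ + x₃ * x₄
  set e₃' := x₁ * x₂ * x₃ + x₁ * x₂ * x₄ + x₁ * x₃ * x₄ + x₂ * x₃ * x₄
  linear_combination
    (9 * (-e₃' * r + x₁ * x₂ * x₃ * x₄ * (x₁ + x₂ + x₃ + x₄ + 4 / 3 * t))) * e₁ +
    (27 * (r ^ 2 - 4 * (x₁ * x₂ * x₃ * x₄))) * e₂ +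
    (27 * (-(4 / 3 * t) * r + e₃' - 4 * t ^ 2)) * e₃ +
    (9 * (4 * r + 16 / 9 * t ^ 2 + 8 * t)) * e₄

lemma exists_mem_pow_three_eq_sq_of_Ψ₃_roots_mem [IsAlgClosed F] (K : Subfield F) (ht : t ∈ K)
    (ht₀ : t ≠ 0) (hroots : ∀ x, (cubeRootCurve t).Ψ₃.eval x = 0 → x ∈ K) :
    ∃ c ∈ K, c ^ 3 = (t - 1) ^ 2 := by
  have h3 : (3 : F) ≠ 0 := three_ne_zero
  obtain ⟨x₁, x₂, x₃, x₄, h⟩ :=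
    exists_eval_eq_leadingCoeff_mul_of_natDegree_eq_four (natDegree_Ψ₃ _ h3)
  rw [leadingCoeff_Ψ₃ _ h3] at h
  have hmem : ∀ {x}, (x - x₁) * (x - x₂) * (x - x₃) * (x - x₄) = 0 → x ∈ K :=
    fun hx => hroots _ (by rw [h, hx, mul_zero])
  have hr : x₁ * x₂ + x₃ * x₄ ∈ K :=
    K.add_mem (K.mul_mem (hmem (by ring)) (hmem (by ring)))
      (K.mul_mem (hmem (by ring)) (hmem (by ring)))
  refine ⟨-(3 * (x₁ * x₂ + x₃ * x₄) + 2 * t) / (4 * t), ?_, ?_⟩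
  · exact K.div_mem (K.neg_mem (K.add_mem (K.mul_mem (ofNat_mem K 3) hr)
      (K.mul_mem (ofNat_mem K 2) ht))) (K.mul_mem (ofNat_mem K 4) ht)
  · rw [div_pow, neg_pow, cubeRootCurve_resolvent h]
    field_simp
    ring

end CubeRootCurve

-- `b² / c` is a cube root of unity, so `b² ∈ K` and then `b = a / b² ∈ K`.
lemma Subfield.mem_of_pow_three_eq_of_sq_eq_pow_three {F : Type*} [Field F] (K : Subfield F)
    (hζ : ∀ z : F, z ^ 3 = 1 → z ∈ K) {a b c : F} (ha : a ∈ K) (ha₀ : a ≠ 0) (hc : c ∈ K)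
    (hca : c ^ 3 = a ^ 2) (hb : b ^ 3 = a) : b ∈ K := by
  have hc₀ : c ≠ 0 := by rintro rfl; exact ha₀ (pow_eq_zero_iff two_ne_zero |>.mp (by simp [← hca]))
  have hb₀ : b ≠ 0 := by rintro rfl; exact ha₀ (by simp [← hb])
  have hb2 : b ^ 2 ∈ K := by
    have hζ' : b ^ 2 / c ∈ K := hζ _ (by
      rw [div_pow, ← pow_mul, show 2 * 3 = 3 * 2 from rfl, pow_mul, hb, hca,
        div_self (pow_ne_zero 2 ha₀)])
    simpa [hc₀] using K.mul_mem hζ' hc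
  simpa [← hb, pow_succ, hb₀] using K.div_mem ha hb2

/-- Suppose `K ⊆ ℚ̄` is a subfield closed under taking square roots, containing
all roots of unity, and such that for every elliptic curve in Weierstrass form all of whose
2-torsion x-coordinates lie in `K`, all x-coordinates of all torsion points lie in `K`. Then
`K` is closed under taking cube roots. -/
theorem stmt_11 (K : Subfield (AlgebraicClosure ℚ))
    (hsq : ∀ a ∈ K, ∀ b : AlgebraicClosure ℚ, b ^ 2 = a → b ∈ K)
    (hru : ∀ n : ℕ, n ≠ 0 → ∀ z : AlgebraicClosure ℚ, z ^ n = 1 → z ∈ K)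
    (htors : ∀ W : WeierstrassCurve.Affine (AlgebraicClosure ℚ),
      (∀ x y : AlgebraicClosure ℚ, ∀ h : W.Nonsingular x y,
        2 • (WeierstrassCurve.Affine.Point.some x y h) = 0 → x ∈ K) →
      ∀ x y : AlgebraicClosure ℚ, ∀ h : W.Nonsingular x y,
        IsOfFinAddOrder (WeierstrassCurve.Affine.Point.some x y h) → x ∈ K) :
    ∀ a ∈ K, ∀ b : AlgebraicClosure ℚ, b ^ 3 = a → b ∈ K := by
  intro a ha b hb
  rcases eq_or_ne a 0 with rfl | ha₀
  · rw [pow_eq_zero_iff three_ne_zero] at hb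
    exact hb ▸ K.zero_mem
  rcases eq_or_ne a (-1) with rfl | ha₁
  · exact hru 6 (by norm_num) b (by rw [show 6 = 3 * 2 from rfl, pow_mul, hb]; norm_num)
  set t := a + 1
  have ht : t ∈ K := K.add_mem ha K.one_mem
  have ht₀ : t ≠ 0 := fun h => ha₁ (eq_neg_of_add_eq_zero_left h)
  have ht₁ : t ≠ 1 := fun h => ha₀ (by simpa [t] using h)
  have hroots : ∀ x, (cubeRootCurve t).Ψ₃.eval x = 0 → x ∈ K := fun x hx => by
    obtain ⟨y, h, hfin⟩ :=
      exists_isOfFinAddOrder_of_eval_Ψ₃ hx (cubeRootCurve_eval_Ψ₂Sq_ne_zero ht₀ ht₁ hx)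
    exact htors _ (fun _ _ h h2 => cubeRootCurve_two_torsion_mem K hsq ht h h2) x y h hfin
  obtain ⟨c, hc, hca⟩ := exists_mem_pow_three_eq_sq_of_Ψ₃_roots_mem K ht ht₀ hroots
  exact K.mem_of_pow_three_eq_of_sq_eq_pow_three (hru 3 three_ne_zero) ha ha₀ hc
    (by simpa [t] using hca) hb
end

section
/- Let F₃(x,δ) = 2x³δ² + (x⁴−1)δ − 2x. Then for δ⁴ ∉ {0,1}, the four roots in x of F₃(x,δ) = 0 are distinct and none of them lies in {0, ∞, δ, −δ, 1/δ, −1/δ, 1, −1, i, −i}. -/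
/-!
A double root of `F₃` would be a common root of `F₃` and `∂F₃/∂x`, but `6 (δ⁴ - 1)` is an explicit
combination of the two, so the four roots are distinct. At each excluded point the value of `F₃`
is, up to a unit, `δ`, `δ⁴ - 1`, `δ² - 1` or `δ² + 1`, all nonzero when `δ⁴ ∉ {0, 1}`.
-/

open Polynomial

namespace Polynomial

theorem nodup_roots_of_not_isRoot_derivative {R : Type*} [CommRing R] [IsDomain R] {p : R[X]}
    (h : ∀ x, p.IsRoot x → ¬ (derivative p).IsRoot x) : p.roots.Nodup := by
  classical
  by_cases hp : p = 0
  · simp [hp]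
  rw [Multiset.nodup_iff_count_le_one]
  intro x
  rw [count_roots, ← not_lt, one_lt_rootMultiplicity_iff_isRoot hp]
  exact fun ⟨hx, hx'⟩ => h x hx hx'

theorem Splits.exists_injective_roots {K : Type*} [Field K] {p : K[X]} {n : ℕ} (hs : p.Splits)
    (hnd : p.roots.Nodup) (hn : p.natDegree = n) :
    ∃ r : Fin n → K, Function.Injective r ∧ p = C p.leadingCoeff * ∏ k, (X - C (r k)) ∧
      ∀ k, p.IsRoot (r k) := by
  let s : Finset K := ⟨p.roots, hnd⟩
  have hcard : Fintype.card s = n := by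
    rw [Fintype.card_coe, ← hn, hs.natDegree_eq_card_roots]
    rfl
  let e := Fintype.equivFinOfCardEq hcard
  refine ⟨fun k => e.symm k, Subtype.val_injective.comp e.symm.injective, ?_,
    fun k => isRoot_of_mem_roots (e.symm k).2⟩
  conv_lhs => rw [hs.eq_prod_roots]
  rw [e.symm.prod_comp (fun x : s => X - C x.1), s.prod_coe_sort (fun x => X - C x)]
  rfl

end Polynomial

section F₃

variable {K : Type*} [Field K] (δ : K)

noncomputable def F₃ : K[X] := C δ * X ^ 4 + C (2 * δ ^ 2) * X ^ 3 - C 2 * X - C δ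

theorem eval_F₃ (x : K) : (F₃ δ).eval x = δ * x ^ 4 + 2 * δ ^ 2 * x ^ 3 - 2 * x - δ := by
  simp [F₃]

theorem eval_derivative_F₃ (x : K) :
    (derivative (F₃ δ)).eval x = 4 * δ * x ^ 3 + 6 * δ ^ 2 * x ^ 2 - 2 := by
  simp only [F₃, derivative_sub, derivative_add, derivative_C_mul_X_pow, derivative_C_mul_X,
    derivative_C, eval_sub, eval_add, eval_mul, eval_C, eval_pow, eval_X, eval_zero]
  push_cast
  ring

variable {δ}

theorem natDegree_F₃ (hδ : δ ≠ 0) : (F₃ δ).natDegree = 4 := by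
  unfold F₃
  compute_degree!

theorem leadingCoeff_F₃ (hδ : δ ≠ 0) : (F₃ δ).leadingCoeff = δ := by
  rw [leadingCoeff, natDegree_F₃ hδ, F₃]
  simp only [coeff_add, coeff_sub, coeff_C_mul, coeff_X_pow, coeff_C, coeff_X]
  norm_num

theorem not_isRoot_derivative_F₃ (h6 : (6 : K) ≠ 0) (h1 : δ ^ 4 ≠ 1) {x : K}
    (hx : (F₃ δ).IsRoot x) : ¬ (derivative (F₃ δ)).IsRoot x := by
  intro hx'
  rw [IsRoot, eval_F₃] at hx
  rw [IsRoot, eval_derivative_F₃] at hx'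
  have hres : 6 * (δ ^ 4 - 1) = 0 := by
    linear_combination (8 * δ ^ 2 * x + 8 * δ * x ^ 2 - 6 * δ ^ 3) * hx +
      (3 + 2 * δ ^ 3 * x - 3 * δ ^ 2 * x ^ 2 - 2 * δ * x ^ 3) * hx'
  exact h1 (sub_eq_zero.mp ((mul_eq_zero.mp hres).resolve_left h6))

theorem eval_F₃_ne_zero (h2 : (2 : K) ≠ 0) (h3 : (3 : K) ≠ 0) (hδ : δ ≠ 0) (h1 : δ ^ 4 ≠ 1)
    {i : K} (hi : i ^ 2 = -1) {y : K}
    (hy : y ∈ ({0, δ, -δ, 1 / δ, -(1 / δ), 1, -1, i, -i} : Set K)) : (F₃ δ).eval y ≠ 0 := by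
  have hδ4 : δ ^ 4 - 1 ≠ 0 := sub_ne_zero.mpr h1
  have hδ2 : δ ^ 2 - 1 ≠ 0 := fun h => hδ4 (by linear_combination (δ ^ 2 + 1) * h)
  have hδ2' : δ ^ 2 + 1 ≠ 0 := fun h => hδ4 (by linear_combination (δ ^ 2 - 1) * h)
  have hi0 : i ≠ 0 := by rintro rfl; norm_num at hi
  rw [eval_F₃]
  simp only [Set.mem_insert_iff, Set.mem_singleton_iff] at hy
  rcases hy with h | h | h | h | h | h | h | h | h <;> subst y
  · simpa using hδ
  · rw [show δ * δ ^ 4 + 2 * δ ^ 2 * δ ^ 3 - 2 * δ - δ = 3 * δ * (δ ^ 4 - 1) by ring]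
    exact mul_ne_zero (mul_ne_zero h3 hδ) hδ4
  · rw [show δ * (-δ) ^ 4 + 2 * δ ^ 2 * (-δ) ^ 3 - 2 * -δ - δ = -δ * (δ ^ 4 - 1) by ring]
    exact mul_ne_zero (neg_ne_zero.mpr hδ) hδ4
  · rw [show δ * (1 / δ) ^ 4 + 2 * δ ^ 2 * (1 / δ) ^ 3 - 2 * (1 / δ) - δ
      = -(δ ^ 4 - 1) / δ ^ 3 by field_simp; ring]
    exact div_ne_zero (neg_ne_zero.mpr hδ4) (pow_ne_zero 3 hδ)
  · rw [show δ * (-(1 / δ)) ^ 4 + 2 * δ ^ 2 * (-(1 / δ)) ^ 3 - 2 * -(1 / δ) - δ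
      = -(δ ^ 4 - 1) / δ ^ 3 by field_simp; ring]
    exact div_ne_zero (neg_ne_zero.mpr hδ4) (pow_ne_zero 3 hδ)
  · rw [show δ * 1 ^ 4 + 2 * δ ^ 2 * 1 ^ 3 - 2 * 1 - δ = 2 * (δ ^ 2 - 1) by ring]
    exact mul_ne_zero h2 hδ2
  · rw [show δ * (-1) ^ 4 + 2 * δ ^ 2 * (-1) ^ 3 - 2 * -1 - δ = -2 * (δ ^ 2 - 1) by ring]
    exact mul_ne_zero (neg_ne_zero.mpr h2) hδ2
  · rw [show δ * i ^ 4 + 2 * δ ^ 2 * i ^ 3 - 2 * i - δ = -2 * i * (δ ^ 2 + 1) by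
      linear_combination (δ * (i ^ 2 - 1) + 2 * δ ^ 2 * i) * hi]
    exact mul_ne_zero (mul_ne_zero (neg_ne_zero.mpr h2) hi0) hδ2'
  · rw [show δ * (-i) ^ 4 + 2 * δ ^ 2 * (-i) ^ 3 - 2 * -i - δ = 2 * i * (δ ^ 2 + 1) by
      linear_combination (δ * (i ^ 2 - 1) - 2 * δ ^ 2 * i) * hi]
    exact mul_ne_zero (mul_ne_zero h2 hi0) hδ2'

end F₃

/-- Let `F₃(x,δ) = 2x³δ² + (x⁴−1)δ − 2x = δx⁴ + 2δ²x³ − 2x − δ`, viewed as a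
degree-4 polynomial in `x`. For `δ⁴ ∉ {0,1}` (over an algebraically closed field of
characteristic zero), its four roots in `x` are distinct and none of them lies in
`{0, δ, −δ, 1/δ, −1/δ, 1, −1, i, −i}` (nor is `∞` a root: the leading coefficient `δ` is
nonzero, as witnessed by the factorization). -/
theorem stmt_12 {K : Type*} [Field K] [CharZero K] [IsAlgClosed K] (δ : K)
    (h0 : δ ^ 4 ≠ 0) (h1 : δ ^ 4 ≠ 1) (i : K) (hi : i ^ 2 = -1) :
    ∃ r : Fin 4 → K, Function.Injective r ∧
      (∀ x : K, 2 * x ^ 3 * δ ^ 2 + (x ^ 4 - 1) * δ - 2 * x =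
        δ * ((x - r 0) * (x - r 1) * (x - r 2) * (x - r 3))) ∧
      ∀ k : Fin 4, r k ≠ 0 ∧ r k ≠ δ ∧ r k ≠ -δ ∧ r k ≠ 1 / δ ∧ r k ≠ -(1 / δ) ∧
        r k ≠ 1 ∧ r k ≠ -1 ∧ r k ≠ i ∧ r k ≠ -i := by
  have hδ : δ ≠ 0 := (pow_ne_zero_iff four_ne_zero).mp h0
  obtain ⟨r, hr, hfac, hroot⟩ := (IsAlgClosed.splits (F₃ δ)).exists_injective_roots
    (nodup_roots_of_not_isRoot_derivative fun _ => not_isRoot_derivative_F₃ (by norm_num) h1)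
    (natDegree_F₃ hδ)
  refine ⟨r, hr, fun x => ?_, fun k => ?_⟩
  · have hx := congrArg (eval x) hfac
    rw [leadingCoeff_F₃ hδ, eval_F₃] at hx
    simp only [eval_mul, eval_C, Fin.prod_univ_four, eval_sub, eval_X] at hx
    linear_combination hx
  · have hk : r k ∉ ({0, δ, -δ, 1 / δ, -(1 / δ), 1, -1, i, -i} : Set K) := fun hy =>
      eval_F₃_ne_zero (by norm_num) (by norm_num) hδ h1 hi hy (hroot k)
    simpa [not_or] using hk
end

section
/- Suppose K ⊆ ℚ̄ is a field closed under square roots in which every polynomial of degree at most 3 with coefficients in K splits. Then every polynomial of degree 4 with coefficients in K splits in K. -/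
/-!
Shifting `z` by a quarter of the cubic coefficient depresses the quartic to
`w⁴ + P w² + Q w + R`. If `Q = 0` this is a quadratic in `w²`. Otherwise the resolvent cubic
`y³ + 2P y² + (P² - 4R) y - Q²` has a root `y ∈ K`, which is nonzero since `Q ≠ 0`; with
`s = √y ∈ K` the depressed quartic splits over `K` into two quadratics (Ferrari), and roots of
quadratics over `K` lie in `K` by completing the square.
-/

open Polynomial

variable {L : Type*} [Field L]

theorem depressed_quartic_eq_mul {P Q R s w : L} (h2 : (2 : L) ≠ 0) (hs : s ≠ 0)
    (hres : (s ^ 2) ^ 3 + 2 * P * (s ^ 2) ^ 2 + (P ^ 2 - 4 * R) * s ^ 2 - Q ^ 2 = 0) :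
    w ^ 4 + P * w ^ 2 + Q * w + R =
      (w ^ 2 + s * w + ((P + s ^ 2) / 2 - Q / (2 * s))) *
        (w ^ 2 - s * w + ((P + s ^ 2) / 2 + Q / (2 * s))) := by
  field_simp
  linear_combination -hres

namespace Subfield

variable (K : Subfield L)

theorem mem_of_quadratic_eq_zero (hsq : ∀ a ∈ K, ∀ b : L, b ^ 2 = a → b ∈ K)
    (h2 : (2 : L) ≠ 0) {b c z : L} (hb : b ∈ K) (hc : c ∈ K) (hz : z ^ 2 + b * z + c = 0) :
    z ∈ K := by
  have hroot : 2 * z + b ∈ K := hsq (b ^ 2 - 4 * c) (by aesop) _ (by linear_combination 4 * hz)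
  rw [show z = (2 * z + b - b) / 2 by field_simp; ring]
  exact K.div_mem (K.sub_mem hroot hb) (ofNat_mem K 2)

theorem exists_mem_resolvent_root [IsAlgClosed L]
    (hcubic : ∀ p : L[X], p ≠ 0 → p.natDegree ≤ 3 →
      (∀ i, p.coeff i ∈ K) → ∀ z : L, p.eval z = 0 → z ∈ K)
    {P Q R : L} (hP : P ∈ K) (hQ : Q ∈ K) (hR : R ∈ K) :
    ∃ y ∈ K, y ^ 3 + 2 * P * y ^ 2 + (P ^ 2 - 4 * R) * y - Q ^ 2 = 0 := by
  set p : L[X] := X ^ 3 + C (2 * P) * X ^ 2 + C (P ^ 2 - 4 * R) * X - C (Q ^ 2)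
  have hdeg : p.natDegree = 3 := by simp only [p]; compute_degree!
  have hcoeff (i : ℕ) : p.coeff i ∈ K := by
    simp only [p, coeff_add, coeff_sub, coeff_C_mul, coeff_X_pow, coeff_X, coeff_C]
    split_ifs <;> aesop
  have hpos : 0 < p.degree := natDegree_pos_iff_degree_pos.mp (by omega)
  obtain ⟨y, hy⟩ := IsAlgClosed.exists_root p hpos.ne'
  exact ⟨y, hcubic p (ne_zero_of_degree_gt hpos) hdeg.le hcoeff y hy, by simpa [p] using hy⟩

theorem mem_of_depressed_quartic_eq_zero [IsAlgClosed L]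
    (hsq : ∀ a ∈ K, ∀ b : L, b ^ 2 = a → b ∈ K)
    (hcubic : ∀ p : L[X], p ≠ 0 → p.natDegree ≤ 3 →
      (∀ i, p.coeff i ∈ K) → ∀ z : L, p.eval z = 0 → z ∈ K)
    (h2 : (2 : L) ≠ 0) {P Q R w : L} (hP : P ∈ K) (hQ : Q ∈ K) (hR : R ∈ K)
    (hw : w ^ 4 + P * w ^ 2 + Q * w + R = 0) : w ∈ K := by
  rcases eq_or_ne Q 0 with rfl | hQ0
  · have hw2 : w ^ 2 ∈ K := K.mem_of_quadratic_eq_zero hsq h2 hP hR (by linear_combination hw)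
    exact hsq _ hw2 w rfl
  obtain ⟨y, hyK, hy⟩ := K.exists_mem_resolvent_root hcubic hP hQ hR
  obtain ⟨s, rfl⟩ := IsAlgClosed.exists_pow_nat_eq y two_pos
  have hsK : s ∈ K := hsq _ hyK s rfl
  have hs0 : s ≠ 0 := by
    rintro rfl
    exact hQ0 (pow_eq_zero_iff two_ne_zero |>.mp (by linear_combination -hy))
  have hmid : (P + s ^ 2) / 2 ∈ K := by aesop
  have hcorr : Q / (2 * s) ∈ K := by aesop
  rw [depressed_quartic_eq_mul h2 hs0 hy, mul_eq_zero] at hw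
  rcases hw with hw | hw
  · exact K.mem_of_quadratic_eq_zero hsq h2 hsK (K.sub_mem hmid hcorr) (by linear_combination hw)
  · exact K.mem_of_quadratic_eq_zero hsq h2 (K.neg_mem hsK) (K.add_mem hmid hcorr)
      (by linear_combination hw)

/-- The cubic coefficient is written `4 * a` so that the depressing shift `z ↦ z + a` needs no
division. -/
theorem mem_of_monic_quartic_eq_zero [IsAlgClosed L]
    (hsq : ∀ a ∈ K, ∀ b : L, b ^ 2 = a → b ∈ K)
    (hcubic : ∀ p : L[X], p ≠ 0 → p.natDegree ≤ 3 →
      (∀ i, p.coeff i ∈ K) → ∀ z : L, p.eval z = 0 → z ∈ K)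
    (h2 : (2 : L) ≠ 0) {a b c d z : L} (ha : a ∈ K) (hb : b ∈ K) (hc : c ∈ K) (hd : d ∈ K)
    (hz : z ^ 4 + 4 * a * z ^ 3 + b * z ^ 2 + c * z + d = 0) : z ∈ K := by
  have hw : z + a ∈ K := K.mem_of_depressed_quartic_eq_zero hsq hcubic h2
    (P := b - 6 * a ^ 2) (Q := c - 2 * a * b + 8 * a ^ 3)
    (R := d - a * c + a ^ 2 * b - 3 * a ^ 4) (by aesop) (by aesop) (by aesop)
    (by linear_combination hz)
  simpa using K.sub_mem hw ha

end Subfield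

/-- Suppose `K ⊆ ℚ̄` is a subfield closed under square roots in which every
nonzero polynomial of degree at most 3 with coefficients in `K` splits (all its roots in `ℚ̄`
lie in `K`). Then every polynomial of degree 4 with coefficients in `K` splits in `K`. -/
theorem stmt_17 (K : Subfield (AlgebraicClosure ℚ))
    (hsq : ∀ a ∈ K, ∀ b : AlgebraicClosure ℚ, b ^ 2 = a → b ∈ K)
    (hcubic : ∀ p : (AlgebraicClosure ℚ)[X], p ≠ 0 → p.natDegree ≤ 3 →
      (∀ i, p.coeff i ∈ K) → ∀ z : AlgebraicClosure ℚ, p.eval z = 0 → z ∈ K) :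
    ∀ p : (AlgebraicClosure ℚ)[X], p.natDegree = 4 →
      (∀ i, p.coeff i ∈ K) → ∀ z : AlgebraicClosure ℚ, p.eval z = 0 → z ∈ K := by
  intro p hdeg hcoeff z hz
  have hlead : p.coeff 4 ≠ 0 := by
    rw [← hdeg]
    exact leadingCoeff_ne_zero.mpr (by rintro rfl; simp at hdeg)
  rw [eval_eq_sum_range, hdeg] at hz
  simp only [Finset.sum_range_succ, Finset.sum_range_zero, zero_add, pow_zero, pow_one,
    mul_one] at hz
  refine K.mem_of_monic_quartic_eq_zero hsq hcubic two_ne_zero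
    (K.div_mem (hcoeff 3) (K.mul_mem (ofNat_mem K 4) (hcoeff 4))) (K.div_mem (hcoeff 2) (hcoeff 4))
    (K.div_mem (hcoeff 1) (hcoeff 4)) (K.div_mem (hcoeff 0) (hcoeff 4)) ?_
  field_simp
  linear_combination hz
end
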